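/- For every real K ≥ 5 and every η ≥ 1, the standard normal cumulative distribution function satisfies Φ( Φ⁻¹(1 − 1/K) + η ) ≥ 1 − (1/K) · √(π/2) · e^{−η²/2} · e^{−η √( ln( K² / (4π ln K) ) )}. -/

import Mathlib

/-!
Let `T = 1 - Φ` be the Gaussian tail and `x₀ = Φ⁻¹(1 - 1/K)`, so `T x₀ = 1/K`. Since
`φ (u + η) = exp (-η u - η²/2) φ u ≤ exp (-η x₀ - η²/2) φ u` for `u > x₀`, we get
`T (x₀ + η) ≤ exp (-η x₀ - η²/2) / K`, and it remains to show `x₀ ≥ a := √(log (K² / (4π log K)))`,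
i.e. `T a ≥ 1/K`. This follows from the Mills-ratio bound `T x ≥ φ x / √(x² + 2)` for `x ≥ 0`,
obtained by integrating the derivative of the right-hand side, which lies in `[-φ, 0]`
(`2` is the least `c` with `u (u² + c + 1) ≤ (u² + c)^{3/2}` on `[0, ∞)`). At `x = a` the bound
reduces to `exp 2 ≤ 4π log K`.
-/

open MeasureTheory Metric Finset
open scoped ComplexOrder

noncomputable section

/-- Standard normal cumulative distribution function. -/
def stdPhi (x : ℝ) : ℝ := ∫ u in Set.Iic x, Real.exp (-u ^ 2 / 2) / Real.sqrt (2 * Real.pi)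

open Classical in
/-- Inverse of the standard normal CDF (defined via choice; on `(0,1)` it is the
genuine inverse since `stdPhi` is a strictly monotone bijection onto `(0,1)`). -/
def stdPhiInv (p : ℝ) : ℝ := if h : ∃ x, stdPhi x = p then h.choose else 0

open Filter Topology ProbabilityTheory Real

lemma gaussianPDFReal_zero_one (u : ℝ) :
    gaussianPDFReal 0 1 u = exp (-u ^ 2 / 2) / √(2 * π) := by
  simp [gaussianPDFReal, div_eq_inv_mul]

lemma stdPhi_eq_integral_gaussianPDFReal (x : ℝ) :
    stdPhi x = ∫ u in Set.Iic x, gaussianPDFReal 0 1 u := by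
  simp only [stdPhi, gaussianPDFReal_zero_one]

lemma hasDerivAt_gaussianPDFReal_zero_one (u : ℝ) :
    HasDerivAt (gaussianPDFReal 0 1) (-u * gaussianPDFReal 0 1 u) u := by
  have h : HasDerivAt (fun v : ℝ => -v ^ 2 / 2) (-u) u :=
    ((hasDerivAt_pow 2 u).neg.div_const 2).congr_deriv (by norm_num; ring)
  rw [funext gaussianPDFReal_zero_one]
  exact (h.exp.div_const _).congr_deriv (by ring)

lemma gaussianPDFReal_zero_one_add (u η : ℝ) :
    gaussianPDFReal 0 1 (u + η) = exp (-(η * u) - η ^ 2 / 2) * gaussianPDFReal 0 1 u := by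
  simp only [gaussianPDFReal_zero_one, mul_div_assoc', ← exp_add]
  ring_nf

lemma tendsto_gaussianPDFReal_zero_one_atTop :
    Tendsto (gaussianPDFReal 0 1) atTop (𝓝 0) := by
  rw [funext gaussianPDFReal_zero_one]
  have h : Tendsto (fun u : ℝ => -u ^ 2 / 2) atTop atBot :=
    (tendsto_neg_atTop_atBot.comp (tendsto_pow_atTop two_ne_zero)).atBot_div_const two_pos
  simpa using (tendsto_exp_atBot.comp h).div_const √(2 * π)

def gaussTail (x : ℝ) : ℝ := ∫ u in Set.Ioi x, gaussianPDFReal 0 1 u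

lemma stdPhi_add_gaussTail (x : ℝ) : stdPhi x + gaussTail x = 1 := by
  rw [stdPhi_eq_integral_gaussianPDFReal, gaussTail, ← Set.compl_Iic,
    integral_add_compl measurableSet_Iic (integrable_gaussianPDFReal 0 1),
    integral_gaussianPDFReal_eq_one 0 one_ne_zero]

lemma gaussTail_strictAnti : StrictAnti gaussTail := by
  intro x y hxy
  have hint := (integrable_gaussianPDFReal 0 1).integrableOn (s := Set.Ioc x y)
  have hpos : 0 < ∫ u in Set.Ioc x y, gaussianPDFReal 0 1 u := by
    rw [← intervalIntegral.integral_of_le hxy.le]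
    exact intervalIntegral.intervalIntegral_pos_of_pos_on
      (integrable_gaussianPDFReal 0 1).intervalIntegrable
      (fun u _ => gaussianPDFReal_pos 0 1 u one_ne_zero) hxy
  rw [gaussTail, gaussTail, ← Set.Ioc_union_Ioi_eq_Ioi hxy.le,
    setIntegral_union (Set.Ioc_disjoint_Ioi le_rfl) measurableSet_Ioi hint
      (integrable_gaussianPDFReal 0 1).integrableOn]
  linarith

lemma gaussTail_add_eq (x η : ℝ) :
    gaussTail (x + η) = ∫ u in Set.Ioi x, gaussianPDFReal 0 1 (u + η) := by
  rw [gaussTail, ← (measurePreserving_add_right volume η).setIntegral_preimage_emb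
    (measurableEmbedding_addRight η), Set.preimage_add_const_Ioi, add_sub_cancel_right]

lemma gaussTail_add_le (x : ℝ) {η : ℝ} (hη : 0 ≤ η) :
    gaussTail (x + η) ≤ exp (-(η * x) - η ^ 2 / 2) * gaussTail x := by
  rw [gaussTail_add_eq, gaussTail, ← integral_const_mul]
  refine setIntegral_mono_on ((integrable_gaussianPDFReal 0 1).comp_add_right η).integrableOn
    ((integrable_gaussianPDFReal 0 1).const_mul _).integrableOn measurableSet_Ioi fun u hu => ?_
  rw [gaussianPDFReal_zero_one_add]
  gcongr
  · exact gaussianPDFReal_nonneg 0 1 u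
  · exact le_of_lt hu

lemma continuous_stdPhi : Continuous stdPhi := by
  have hint := integrable_gaussianPDFReal 0 1
  have h : stdPhi = fun x => (∫ u in (0 : ℝ)..x, gaussianPDFReal 0 1 u) + stdPhi 0 := by
    ext x
    rw [stdPhi_eq_integral_gaussianPDFReal, stdPhi_eq_integral_gaussianPDFReal,
      ← intervalIntegral.integral_Iic_sub_Iic hint.integrableOn hint.integrableOn, sub_add_cancel]
  rw [h]
  exact (hint.continuous_primitive 0).add continuous_const

lemma tendsto_stdPhi_atTop : Tendsto stdPhi atTop (𝓝 1) := by
  rw [funext stdPhi_eq_integral_gaussianPDFReal, ← integral_gaussianPDFReal_eq_one 0 one_ne_zero]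
  exact (aecover_Iic tendsto_id).integral_tendsto_of_countably_generated
    (integrable_gaussianPDFReal 0 1)

lemma tendsto_stdPhi_atBot : Tendsto stdPhi atBot (𝓝 0) := by
  have h : Tendsto gaussTail atBot (𝓝 1) := by
    rw [← integral_gaussianPDFReal_eq_one 0 one_ne_zero]
    exact (aecover_Ioi tendsto_id).integral_tendsto_of_countably_generated
      (integrable_gaussianPDFReal 0 1)
  have h' := tendsto_const_nhds (x := (1 : ℝ)) (f := atBot) |>.sub h
  rw [sub_self] at h'
  refine h'.congr fun x => ?_
  linarith [stdPhi_add_gaussTail x]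

lemma stdPhi_stdPhiInv {p : ℝ} (hp₀ : 0 < p) (hp₁ : p < 1) : stdPhi (stdPhiInv p) = p := by
  have hp : ∃ x, stdPhi x = p :=
    mem_range_of_exists_le_of_exists_ge continuous_stdPhi
      (tendsto_stdPhi_atBot.eventually (eventually_le_nhds hp₀)).exists
      (tendsto_stdPhi_atTop.eventually (eventually_ge_nhds hp₁)).exists
  rw [stdPhiInv, dif_pos hp]
  exact hp.choose_spec

lemma le_setIntegral_Ioi_of_hasDerivAt {F F' f : ℝ → ℝ} {x : ℝ}
    (hderiv : ∀ u ∈ Set.Ici x, HasDerivAt F (F' u) u) (hF' : ∀ u ∈ Set.Ioi x, F' u ≤ 0)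
    (hF : Tendsto F atTop (𝓝 0)) (hf : IntegrableOn f (Set.Ioi x))
    (hle : ∀ u ∈ Set.Ioi x, -F' u ≤ f u) : F x ≤ ∫ u in Set.Ioi x, f u :=
  calc F x = ∫ u in Set.Ioi x, -F' u := by
        rw [integral_neg, integral_Ioi_of_hasDerivAt_of_nonpos' hderiv hF' hF]; ring
    _ ≤ ∫ u in Set.Ioi x, f u :=
        setIntegral_mono_on (integrableOn_Ioi_deriv_of_nonpos' hderiv hF' hF).neg hf
          measurableSet_Ioi hle

lemma mul_sq_add_three_le_sqrt_pow_three {u : ℝ} (hu : 0 ≤ u) :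
    u * (u ^ 2 + 3) ≤ √(u ^ 2 + 2) ^ 3 := by
  refine (pow_le_pow_iff_left₀ (by positivity) (by positivity) two_ne_zero).1 ?_
  rw [← pow_mul, show 3 * 2 = 2 * 3 by rfl, pow_mul, sq_sqrt (by positivity)]
  nlinarith [sq_nonneg u, pow_nonneg hu 4]

lemma hasDerivAt_gaussianPDFReal_div_sqrt (u : ℝ) :
    HasDerivAt (fun v => gaussianPDFReal 0 1 v / √(v ^ 2 + 2))
      (-(u * (u ^ 2 + 3) / √(u ^ 2 + 2) ^ 3 * gaussianPDFReal 0 1 u)) u := by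
  have hs : 0 < √(u ^ 2 + 2) := sqrt_pos.2 (by positivity)
  have hsq : √(u ^ 2 + 2) ^ 2 = u ^ 2 + 2 := sq_sqrt (by positivity)
  refine ((hasDerivAt_gaussianPDFReal_zero_one u).div
    (((hasDerivAt_pow 2 u).add_const 2).sqrt (by positivity)) hs.ne').congr_deriv ?_
  field_simp
  linear_combination (-(2 * u * gaussianPDFReal 0 1 u)) * hsq

lemma gaussianPDFReal_div_sqrt_le_gaussTail {x : ℝ} (hx : 0 ≤ x) :
    gaussianPDFReal 0 1 x / √(x ^ 2 + 2) ≤ gaussTail x := by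
  have hcoef_le : ∀ u ∈ Set.Ioi x, u * (u ^ 2 + 3) / √(u ^ 2 + 2) ^ 3 ≤ 1 := fun u hu =>
    div_le_one_of_le₀ (mul_sq_add_three_le_sqrt_pow_three (hx.trans (le_of_lt hu)))
      (by positivity)
  have hcoef_nonneg : ∀ u ∈ Set.Ioi x, 0 ≤ u * (u ^ 2 + 3) / √(u ^ 2 + 2) ^ 3 := by
    intro u hu
    have : 0 ≤ u := hx.trans (le_of_lt hu)
    positivity
  have htendsto : Tendsto (fun v => gaussianPDFReal 0 1 v / √(v ^ 2 + 2)) atTop (𝓝 0) :=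
    squeeze_zero (fun v => div_nonneg (gaussianPDFReal_nonneg 0 1 v) (sqrt_nonneg _))
      (fun v => div_le_self (gaussianPDFReal_nonneg 0 1 v)
        (one_le_sqrt.2 (by nlinarith [sq_nonneg v])))
      tendsto_gaussianPDFReal_zero_one_atTop
  refine le_setIntegral_Ioi_of_hasDerivAt (fun u _ => hasDerivAt_gaussianPDFReal_div_sqrt u)
    (fun u hu => ?_) htendsto (integrable_gaussianPDFReal 0 1).integrableOn fun u hu => ?_
  · exact neg_nonpos.2 (mul_nonneg (hcoef_nonneg u hu) (gaussianPDFReal_nonneg 0 1 u))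
  · rw [neg_neg]
    exact mul_le_of_le_one_left (gaussianPDFReal_nonneg 0 1 u) (hcoef_le u hu)

lemma one_div_le_gaussTail_sqrt_log {K : ℝ} (hK : 0 < K) (h₁ : exp 2 ≤ 4 * π * log K)
    (h₂ : 4 * π * log K ≤ K ^ 2) :
    1 / K ≤ gaussTail √(log (K ^ 2 / (4 * π * log K))) := by
  set c := 4 * π * log K
  set L := log (K ^ 2 / c)
  have hc : 0 < c := (exp_pos 2).trans_le h₁
  have hL : 0 ≤ L := log_nonneg ((one_le_div hc).2 h₂)
  have hexp : exp (-L) = c / K ^ 2 := by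
    rw [exp_neg, exp_log (by positivity), inv_div]
  have hL_le : L + 2 ≤ 2 * log K := by
    have : 2 ≤ log c := (le_log_iff_exp_le hc).2 h₁
    have : L = 2 * log K - log c := by
      simp only [L]
      rw [log_div (by positivity) hc.ne', log_pow, Nat.cast_ofNat]
    linarith
  have hsq : 2 * π * (L + 2) ≤ (K * exp (-L / 2)) ^ 2 := by
    rw [mul_pow, ← exp_nat_mul, Nat.cast_ofNat, show 2 * (-L / 2) = -L by ring, hexp,
      mul_div_cancel₀ _ (by positivity)]
    nlinarith [pi_pos]
  have hkey : √(2 * π) * √(L + 2) ≤ K * exp (-L / 2) := by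
    rw [← sqrt_mul (by positivity), ← sqrt_sq (by positivity : 0 ≤ K * exp (-L / 2))]
    exact sqrt_le_sqrt hsq
  refine le_trans ?_ (gaussianPDFReal_div_sqrt_le_gaussTail (sqrt_nonneg L))
  rw [gaussianPDFReal_zero_one, sq_sqrt hL, div_div, div_le_div_iff₀ hK (by positivity)]
  linarith

lemma four_pi_log_le_sq {K : ℝ} (hK : 5 ≤ K) : 4 * π * log K ≤ K ^ 2 := by
  have hK₀ : 0 < K := by linarith
  have hlog : log K ≤ K / exp 1 := by
    have := log_le_sub_one_of_pos (div_pos hK₀ (exp_pos 1))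
    rw [log_div hK₀.ne' (exp_pos 1).ne', log_exp] at this
    linarith
  have h4pi : 4 * π ≤ exp 1 * K := by
    nlinarith [pi_lt_d2, exp_one_gt_d9]
  calc 4 * π * log K ≤ exp 1 * K * (K / exp 1) :=
        mul_le_mul h4pi hlog (log_nonneg (by linarith)) (by positivity)
    _ = K ^ 2 := by field_simp

lemma exp_two_le_four_pi_log {K : ℝ} (hK : 5 ≤ K) : exp 2 ≤ 4 * π * log K := by
  have hlog : 1 ≤ log K := by
    rw [le_log_iff_exp_le (by linarith)]
    linarith [exp_one_lt_d9]
  have he2 : exp 2 < 8 := by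
    rw [show (2 : ℝ) = 1 + 1 by norm_num, exp_add]
    nlinarith [exp_one_lt_d9, exp_pos 1]
  nlinarith [pi_gt_three]

/-- refined Gaussian CDF tail estimate for `p = 1 - 1/K`, `K ≥ 5`. -/
theorem stmt12 (K η : ℝ) (hK : 5 ≤ K) (hη : 1 ≤ η) :
    1 - (1 / K) * Real.sqrt (Real.pi / 2) * Real.exp (-η ^ 2 / 2) *
        Real.exp (-η * Real.sqrt (Real.log (K ^ 2 / (4 * Real.pi * Real.log K))))
      ≤ stdPhi (stdPhiInv (1 - 1 / K) + η) := by
  have hK₀ : 0 < K := by linarith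
  set x₀ := stdPhiInv (1 - 1 / K)
  set a := √(log (K ^ 2 / (4 * π * log K)))
  have hx₀ : gaussTail x₀ = 1 / K := by
    have hp₀ : 0 < 1 - 1 / K := by rw [sub_pos, div_lt_one hK₀]; linarith
    have hp₁ : 1 - 1 / K < 1 := by simpa using hK₀
    linarith [stdPhi_add_gaussTail x₀, stdPhi_stdPhiInv hp₀ hp₁]
  have ha : a ≤ x₀ := gaussTail_strictAnti.le_iff_ge.1 <| hx₀.trans_le <|
    one_div_le_gaussTail_sqrt_log hK₀ (exp_two_le_four_pi_log hK) (four_pi_log_le_sq hK)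
  have htail : gaussTail (x₀ + η) ≤ 1 / K * exp (-η ^ 2 / 2) * exp (-η * a) :=
    calc gaussTail (x₀ + η) ≤ exp (-(η * x₀) - η ^ 2 / 2) * gaussTail x₀ :=
          gaussTail_add_le x₀ (by linarith)
      _ = 1 / K * exp (-η ^ 2 / 2) * exp (-η * x₀) := by
          rw [hx₀, sub_eq_add_neg, exp_add]; ring_nf
      _ ≤ 1 / K * exp (-η ^ 2 / 2) * exp (-η * a) := by
          gcongr 1 / K * exp (-η ^ 2 / 2) * ?_
          exact exp_le_exp.2 (by nlinarith)
  have hsqrt : 1 ≤ √(π / 2) := one_le_sqrt.2 (by linarith [pi_gt_three])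
  have hpos : 0 ≤ 1 / K * exp (-η ^ 2 / 2) * exp (-η * a) := by positivity
  nlinarith [stdPhi_add_gaussTail (x₀ + η)]

end
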